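/- Let S be an additively reduced, additively Furstenberg semidomain with A₊(S) = S^×, and G a torsion-free abelian group. Every trinomial f = s_0 x^{g_0} + s_1 x^{g_1} + s_2 x^{g_2} ∈ S[G] (distinct exponents, nonzero coefficients) in which the middle coefficient s_1 (for g_0 > g_1 > g_2) is a unit of S is irreducible in S[G]. -/

import Mathlib

/-- Witness that `S` is a semidomain: an injective semiring hom into an integral domain. -/
structure SemidomainWitness (S : Type*) [CommSemiring S] where
  D : Type
  [commRing : CommRing D]
  [isDomain : IsDomain D]
  emb : S →+* D
  inj : Function.Injective emb

/-- `S` is a semidomain, i.e. (isomorphic to) a subsemiring of an integral domain. -/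
def IsSemidomain (S : Type*) [CommSemiring S] : Prop := Nonempty (SemidomainWitness S)

/-- `S` is additively reduced: `0` is the only additively invertible element. -/
def AddReduced (S : Type*) [AddZeroClass S] : Prop := ∀ a b : S, a + b = 0 → a = 0

/-- `s` is an atom of the additive monoid `(S, +)` (for `S` additively reduced):
it is nonzero and cannot be written as a sum of two nonzero elements. -/
def IsAddAtom {S : Type*} [AddZeroClass S] (s : S) : Prop :=
  s ≠ 0 ∧ ∀ a b : S, s = a + b → a = 0 ∨ b = 0

/-- `S` is additively Furstenberg: every nonzero element is divisible in `(S, +)`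
by an additive atom. -/
def AddFurstenberg (S : Type*) [AddZeroClass S] : Prop :=
  ∀ s : S, s ≠ 0 → ∃ a t : S, IsAddAtom a ∧ s = a + t


section GroupAlg
variable {S : Type*} [CommSemiring S] {G : Type*} [AddCommGroup G]

/-- A monomial `s·x^g` in the group semidomain `S[G]`. -/
def IsMonomial (f : AddMonoidAlgebra S G) : Prop :=
  ∃ (g : G) (s : S), f = AddMonoidAlgebra.single g s

/-- `f` is monolithic: every factorization of `f` in `S[G]` has a monomial factor. -/
def Monolithic (f : AddMonoidAlgebra S G) : Prop :=
  f ≠ 0 ∧ ∀ p q : AddMonoidAlgebra S G, f = p * q → IsMonomial p ∨ IsMonomial q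

end GroupAlg

/-!
Since `S` has neither zero divisors nor additive inverses, no cancellation occurs when
multiplying in `S[G]`, so `supp (p * q) = supp p + supp q`. Hence `f`, having two support
elements, is not a unit, and a monomial factor of `f` is a unit because its coefficient divides
the unit `s₁`. If neither factor is a monomial, the cross terms `max p + min q` and
`min p + max q` lie strictly between `g₂ = min p + min q` and `g₀ = max p + max q`, so both
equal `g₁`; then `s₁` is a sum with two nonzero summands, although units are additive atoms.
-/

theorem IsSemidomain.noZeroDivisors {S : Type*} [CommSemiring S] (hS : IsSemidomain S) :
    NoZeroDivisors S := by
  obtain ⟨W⟩ := hS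
  let _ := W.commRing
  have _ := W.isDomain
  exact W.inj.noZeroDivisors W.emb (map_zero W.emb) (map_mul W.emb)

theorem AddReduced.subsingleton_addUnits {S : Type*} [AddMonoid S] (hred : AddReduced S) :
    Subsingleton (AddUnits S) :=
  Subsingleton.addUnits_of_isAddUnit fun a ⟨u, hu⟩ ↦ hred a (-u : AddUnits S) (by simp [← hu])

theorem IsAddAtom.eq_zero_or_eq_zero_of_eq_sum {M ι : Type*} [AddCommMonoid M]
    [Subsingleton (AddUnits M)] [DecidableEq ι] {t : Finset ι} {f : ι → M}
    (hatom : IsAddAtom (∑ k ∈ t, f k)) {i j : ι} (hi : i ∈ t) (hj : j ∈ t) (hij : i ≠ j) :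
    f i = 0 ∨ f j = 0 := by
  rw [← Finset.add_sum_erase t f hi] at hatom
  refine (hatom.2 _ _ rfl).imp id fun hrest ↦ ?_
  exact Finset.sum_eq_zero_iff.mp hrest j (Finset.mem_erase.mpr ⟨hij.symm, hj⟩)

theorem isMonomial_iff_card_support_le_one {S : Type*} [CommSemiring S] {G : Type*}
    [AddCommGroup G] {p : AddMonoidAlgebra S G} :
    IsMonomial p ↔ p.coeff.support.card ≤ 1 := by
  rw [Finsupp.card_support_le_one']
  exact exists₂_congr fun g s ↦ AddMonoidAlgebra.coeff_injective.eq_iff.symm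

theorem eq_of_mem_triple_of_lt_of_lt {α : Type*} [LinearOrder α] {g₀ g₁ g₂ x y z : α}
    (h01 : g₁ < g₀) (h12 : g₂ < g₁) (hx : x ∈ ({g₀, g₁, g₂} : Finset α))
    (hy : y ∈ ({g₀, g₁, g₂} : Finset α)) (hz : z ∈ ({g₀, g₁, g₂} : Finset α))
    (hxy : x < y) (hyz : y < z) : y = g₁ := by
  simp only [Finset.mem_insert, Finset.mem_singleton] at hx hy hz
  rcases hx with rfl | rfl | rfl <;> rcases hy with rfl | rfl | rfl <;>
    rcases hz with rfl | rfl | rfl <;> order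

namespace AddMonoidAlgebra

open scoped Pointwise

theorem coeff_mul_eq_sum_filter {S G : Type*} [Semiring S] [Add G] [DecidableEq G]
    (p q : AddMonoidAlgebra S G) (c : G) :
    (p * q).coeff c = ∑ x ∈ p.coeff.support ×ˢ q.coeff.support with x.1 + x.2 = c,
      p.coeff x.1 * q.coeff x.2 := by
  rw [coeff_mul, Finset.sum_filter, Finset.sum_product]
  rfl

section Support

variable {S G : Type*} [Semiring S] [NoZeroDivisors S] [Subsingleton (AddUnits S)]

theorem coeff_mul_add_ne_zero [Add G] {p q : AddMonoidAlgebra S G} {a b : G}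
    (ha : p.coeff a ≠ 0) (hb : q.coeff b ≠ 0) : (p * q).coeff (a + b) ≠ 0 := by
  classical
  rw [coeff_mul_eq_sum_filter, Ne, Finset.sum_eq_zero_iff]
  exact fun h ↦ mul_ne_zero ha hb <| h (a, b) <| by simp [ha, hb]

theorem support_coeff_mul [Add G] [DecidableEq G] (p q : AddMonoidAlgebra S G) :
    (p * q).coeff.support = p.coeff.support + q.coeff.support := by
  refine (support_coeff_mul_subset p q).antisymm ?_
  intro x hx
  obtain ⟨a, ha, b, hb, rfl⟩ := Finset.mem_add.mp hx
  exact Finsupp.mem_support_iff.mpr <|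
    coeff_mul_add_ne_zero (Finsupp.mem_support_iff.mp ha) (Finsupp.mem_support_iff.mp hb)

theorem not_isUnit_of_mem_support [AddMonoid G] [IsRightCancelAdd G] {f : AddMonoidAlgebra S G}
    {a b : G} (ha : a ∈ f.coeff.support) (hb : b ∈ f.coeff.support) (hab : a ≠ b) :
    ¬IsUnit f := by
  classical
  intro hunit
  obtain ⟨v, hv⟩ := hunit.exists_right_inv
  have := nontrivial_of_ne _ _ (Finsupp.mem_support_iff.mp ha)
  have hv0 : v ≠ 0 := right_ne_zero_of_mul_eq_one hv
  obtain ⟨c, hc⟩ := Finsupp.support_nonempty_iff.mpr (coeff_eq_zero.not.mpr hv0)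
  have hsupp (x) (hx : x ∈ f.coeff.support) : x + c = 0 := by
    have := support_coeff_one_subset (k := S) (G := G)
    rw [← hv, support_coeff_mul] at this
    exact Finset.mem_zero.mp (this (Finset.add_mem_add hx hc))
  exact hab (add_right_cancel ((hsupp a ha).trans (hsupp b hb).symm))

theorem not_isAddAtom_coeff_mul [Add G] {p q : AddMonoidAlgebra S G} {a a' b b' c : G}
    (ha : p.coeff a ≠ 0) (hb' : q.coeff b' ≠ 0) (ha' : p.coeff a' ≠ 0) (hb : q.coeff b ≠ 0)
    (hne : a ≠ a') (h : a + b' = c) (h' : a' + b = c) : ¬IsAddAtom ((p * q).coeff c) := by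
  classical
  rw [coeff_mul_eq_sum_filter]
  intro hatom
  have mem {x y : G} (hx : p.coeff x ≠ 0) (hy : q.coeff y ≠ 0) (hxy : x + y = c) :
      (x, y) ∈ (p.coeff.support ×ˢ q.coeff.support).filter (fun x ↦ x.1 + x.2 = c) :=
    Finset.mem_filter.mpr ⟨by simp [hx, hy], hxy⟩
  rcases hatom.eq_zero_or_eq_zero_of_eq_sum (mem ha hb' h) (mem ha' hb h')
    (fun heq ↦ hne (congrArg Prod.fst heq)) with h0 | h0
  · exact mul_ne_zero ha hb' h0
  · exact mul_ne_zero ha' hb h0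

end Support

section Monomial

variable {S G : Type*} [CommSemiring S] [AddCommGroup G]

theorem _root_.IsMonomial.isUnit_of_isUnit_coeff_mul {p q : AddMonoidAlgebra S G} {c : G}
    (hp : IsMonomial p) (h : IsUnit ((p * q).coeff c)) : IsUnit p := by
  obtain ⟨a, s, rfl⟩ := hp
  rw [coeff_single_mul_apply] at h
  obtain ⟨u, rfl⟩ := isUnit_of_mul_isUnit_left h
  have : IsUnit ((u : S), Multiplicative.ofAdd a) := Prod.isUnit_iff.mpr ⟨u.isUnit, Group.isUnit _⟩
  simpa using this.map (singleHom (R := S) (M := G))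

theorem not_isAddAtom_coeff_mul_of_support_subset [NoZeroDivisors S] [Subsingleton (AddUnits S)]
    [LinearOrder G] [IsOrderedAddMonoid G] {p q : AddMonoidAlgebra S G}
    (hp : ¬IsMonomial p) (hq : ¬IsMonomial q) {g₀ g₁ g₂ : G} (h01 : g₁ < g₀) (h12 : g₂ < g₁)
    (hsupp : (p * q).coeff.support ⊆ {g₀, g₁, g₂}) : ¬IsAddAtom ((p * q).coeff g₁) := by
  rw [isMonomial_iff_card_support_le_one, not_le] at hp hq
  have hA := Finset.card_pos.mp (one_pos.trans hp)
  have hB := Finset.card_pos.mp (one_pos.trans hq)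
  set a₀ := p.coeff.support.max' hA
  set a₂ := p.coeff.support.min' hA
  set b₀ := q.coeff.support.max' hB
  set b₂ := q.coeff.support.min' hB
  have ha : a₂ < a₀ := Finset.min'_lt_max'_of_card _ hp
  have hb : b₂ < b₀ := Finset.min'_lt_max'_of_card _ hq
  have mem {x y : G} (hx : x ∈ p.coeff.support) (hy : y ∈ q.coeff.support) :
      x + y ∈ ({g₀, g₁, g₂} : Finset G) :=
    hsupp (by rw [support_coeff_mul]; exact Finset.add_mem_add hx hy)
  have ha₀ := Finset.max'_mem _ hA
  have ha₂ := Finset.min'_mem _ hA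
  have hb₀ := Finset.max'_mem _ hB
  have hb₂ := Finset.min'_mem _ hB
  have hmid₁ : a₀ + b₂ = g₁ := eq_of_mem_triple_of_lt_of_lt h01 h12 (mem ha₂ hb₂) (mem ha₀ hb₂)
    (mem ha₀ hb₀) (add_lt_add_left ha _) (add_lt_add_right hb _)
  have hmid₂ : a₂ + b₀ = g₁ := eq_of_mem_triple_of_lt_of_lt h01 h12 (mem ha₂ hb₂) (mem ha₂ hb₀)
    (mem ha₀ hb₀) (add_lt_add_right hb _) (add_lt_add_left ha _)
  simp only [Finsupp.mem_support_iff] at ha₀ ha₂ hb₀ hb₂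
  exact not_isAddAtom_coeff_mul ha₀ hb₂ ha₂ hb₀ ha.ne' hmid₁ hmid₂

end Monomial

end AddMonoidAlgebra

theorem trinomial_irreducible_of_middle_unit_general
    {S : Type*} [CommSemiring S] {G : Type*} [AddCommGroup G] [LinearOrder G] [IsOrderedAddMonoid G]
    (hS : IsSemidomain S) (hred : AddReduced S)
    (hatoms : ∀ a : S, IsAddAtom a ↔ IsUnit a)
    (s₀ s₁ s₂ : S) (g₀ g₁ g₂ : G)
    (hs₀ : s₀ ≠ 0) (hs₂ : s₂ ≠ 0)
    (h01 : g₁ < g₀) (h12 : g₂ < g₁) (hu : IsUnit s₁)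
    (f : AddMonoidAlgebra S G)
    (hf : f = AddMonoidAlgebra.single g₀ s₀ + AddMonoidAlgebra.single g₁ s₁ +
        AddMonoidAlgebra.single g₂ s₂) :
    Irreducible f := by
  have := hS.noZeroDivisors
  have := hred.subsingleton_addUnits
  have h02 := h12.trans h01
  have hcoeff (c : G) : f.coeff c =
      (if c = g₀ then s₀ else 0) + (if c = g₁ then s₁ else 0) + (if c = g₂ then s₂ else 0) := by
    simp [hf, Finsupp.single_apply, eq_comm]
  have hsupp : f.coeff.support ⊆ {g₀, g₁, g₂} := fun c hc ↦ by
    by_contra hc'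
    simp only [Finset.mem_insert, Finset.mem_singleton, not_or] at hc'
    simp [hcoeff, hc'] at hc
  have hg₀ : g₀ ∈ f.coeff.support := by simp [hcoeff, h01.ne', h02.ne', hs₀]
  have hg₂ : g₂ ∈ f.coeff.support := by simp [hcoeff, h12.ne, h02.ne, hs₂]
  have hf₁ : IsUnit (f.coeff g₁) := by simpa [hcoeff, h01.ne, h12.ne'] using hu
  refine ⟨AddMonoidAlgebra.not_isUnit_of_mem_support hg₀ hg₂ h02.ne', fun p q hpq ↦ ?_⟩
  subst hpq
  by_contra! hpq
  have hp : ¬IsMonomial p := fun hp ↦ hpq.1 (hp.isUnit_of_isUnit_coeff_mul hf₁)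
  have hq : ¬IsMonomial q := fun hq ↦ hpq.2 (hq.isUnit_of_isUnit_coeff_mul (mul_comm p q ▸ hf₁))
  exact AddMonoidAlgebra.not_isAddAtom_coeff_mul_of_support_subset hp hq h01 h12 hsupp ((hatoms _).mpr hf₁)

/-- A trinomial in `S[G]` whose middle coefficient (w.r.t. `g₀ > g₁ > g₂`) is a unit is
irreducible, when `S` is additively reduced, additively Furstenberg and `A₊(S) = S^×`. -/
theorem trinomial_irreducible_of_middle_unit
    {S : Type*} [CommSemiring S] {G : Type*} [AddCommGroup G] [LinearOrder G] [IsOrderedAddMonoid G]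
    (hS : IsSemidomain S) (hred : AddReduced S) (hfur : AddFurstenberg S)
    (hatoms : ∀ a : S, IsAddAtom a ↔ IsUnit a)
    (s₀ s₁ s₂ : S) (g₀ g₁ g₂ : G)
    (hs₀ : s₀ ≠ 0) (hs₁ : s₁ ≠ 0) (hs₂ : s₂ ≠ 0)
    (h01 : g₁ < g₀) (h12 : g₂ < g₁) (hu : IsUnit s₁)
    (f : AddMonoidAlgebra S G)
    (hf : f = AddMonoidAlgebra.single g₀ s₀ + AddMonoidAlgebra.single g₁ s₁ +
        AddMonoidAlgebra.single g₂ s₂) :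
    Irreducible f :=
  trinomial_irreducible_of_middle_unit_general hS hred hatoms s₀ s₁ s₂ g₀ g₁ g₂ hs₀ hs₂ h01 h12 hu f
    hf
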